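/- Let n ≥ 1 and let S_n(Sym_n) be the monoid presented by generators x_1,…,x_n and relations x_{σ(1)}x_{σ(2)}⋯x_{σ(n)} = x_1x_2⋯x_n for all σ ∈ Sym_n. If u and v are words in the free monoid on x_1,…,x_n, neither of which contains a subword of the form x_{σ(1)}x_{σ(2)}⋯x_{σ(n)} for any σ ∈ Sym_n, and u and v represent the same element of S_n(Sym_n), then u = v as words. -/
import Mathlib


/-- The word `x_{σ(1)} x_{σ(2)} ⋯ x_{σ(n)}` in the free monoid on `n` generators
(generator `x_j` is indexed by `j-1 : Fin n`). -/
def permWord {n : ℕ} (σ : Equiv.Perm (Fin n)) : FreeMonoid (Fin n) :=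
  FreeMonoid.ofList (List.ofFn fun i => σ i)

/-- The word `x_ε = x_1 x_2 ⋯ x_n`. -/
def epsWord (n : ℕ) : FreeMonoid (Fin n) :=
  FreeMonoid.ofList (List.ofFn fun i : Fin n => i)

/-- The defining relations `x_{σ(1)} ⋯ x_{σ(n)} = x_1 ⋯ x_n`, `σ ∈ Sym_n`. -/
def symRel (n : ℕ) : FreeMonoid (Fin n) → FreeMonoid (Fin n) → Prop :=
  fun a b => ∃ σ : Equiv.Perm (Fin n), a = permWord σ ∧ b = epsWord n

/-- The canonical projection from the free monoid onto `S_n(Sym_n)`. -/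
def proj (n : ℕ) : FreeMonoid (Fin n) →* PresentedMonoid (symRel n) :=
  PresentedMonoid.mk (symRel n)

/-- `u` contains a subword of the form `x_{σ(1)} ⋯ x_{σ(n)}` for some `σ ∈ Sym_n`. -/
def HasPermSubword {n : ℕ} (u : FreeMonoid (Fin n)) : Prop :=
  ∃ (σ : Equiv.Perm (Fin n)) (a b : FreeMonoid (Fin n)), u = a * permWord σ * b

/-- The word `x_1^{m_1} · x_ε · x_2^{m_2} ⋯ x_n^{m_n}` (0-indexed: `m i` is the
exponent of generator `i`). -/
def normalWord (n : ℕ) (h : 0 < n) (m : Fin n → ℕ) : FreeMonoid (Fin n) :=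
  FreeMonoid.ofList (List.replicate (m ⟨0, h⟩) ⟨0, h⟩) * epsWord n *
    FreeMonoid.ofList (((List.finRange n).drop 1).flatMap fun i => List.replicate (m i) i)


lemma hasPermSubword_mul_left {n : ℕ} {u : FreeMonoid (Fin n)} (w : FreeMonoid (Fin n))
    (h : HasPermSubword u) : HasPermSubword (w * u) := by
  obtain ⟨σ, a, b, rfl⟩ := h
  exact ⟨σ, w * a, b, by simp [mul_assoc]⟩

lemma hasPermSubword_mul_right {n : ℕ} {u : FreeMonoid (Fin n)} (w : FreeMonoid (Fin n))
    (h : HasPermSubword u) : HasPermSubword (u * w) := by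
  obtain ⟨σ, a, b, rfl⟩ := h
  exact ⟨σ, a, b * w, by simp [mul_assoc]⟩

lemma hasPermSubword_permWord {n : ℕ} (σ : Equiv.Perm (Fin n)) :
    HasPermSubword (permWord σ) := ⟨σ, 1, 1, by simp⟩

lemma hasPermSubword_epsWord (n : ℕ) : HasPermSubword (epsWord n) := by
  refine ⟨1, 1, 1, by simp [permWord, epsWord]⟩

/-- Two words with no subword of the form `x_{σ(1)}⋯x_{σ(n)}` representing the same element
of `S_n(Sym_n)` are equal. -/
theorem eq_of_proj_eq_of_no_subword (n : ℕ) (hn : 1 ≤ n) (u v : FreeMonoid (Fin n))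
    (hu : ¬ HasPermSubword u) (hv : ¬ HasPermSubword v)
    (h : proj n u = proj n v) : u = v := by
  have h' : (conGen (symRel n)) u v := Quotient.exact h
  have key : ∀ a b : FreeMonoid (Fin n), conGen (symRel n) a b →
      a = b ∨ (HasPermSubword a ∧ HasPermSubword b) := by
    intro a b hab
    induction hab with
    | of x y hxy =>
      obtain ⟨σ, rfl, rfl⟩ := hxy
      exact Or.inr ⟨hasPermSubword_permWord σ, hasPermSubword_epsWord n⟩
    | refl x => exact Or.inl rfl
    | symm _ ih => exact ih.imp Eq.symm And.symm
    | trans _ _ ih1 ih2 =>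
      rcases ih1 with rfl | ⟨h1, h2⟩
      · exact ih2
      · rcases ih2 with rfl | ⟨h3, h4⟩
        · exact Or.inr ⟨h1, h2⟩
        · exact Or.inr ⟨h1, h4⟩
    | mul _ _ ih1 ih2 =>
      rcases ih1 with rfl | ⟨h1, h2⟩
      · rcases ih2 with rfl | ⟨h3, h4⟩
        · exact Or.inl rfl
        · exact Or.inr ⟨hasPermSubword_mul_left _ h3, hasPermSubword_mul_left _ h4⟩
      · exact Or.inr ⟨hasPermSubword_mul_right _ h1, hasPermSubword_mul_right _ h2⟩
  rcases key u v h' with rfl | ⟨h1, _⟩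
  · rfl
  · exact absurd h1 hu
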